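/- Let h : ℝ → ℝ be twice continuously differentiable and suppose: (a) h'' has exactly n zeros ξ₁ < ⋯ < ξₙ (n ≥ 1 finite), and there exist q₁ ≥ 1, ε₀ > 0, c₀ > 0 such that |h''(ξ)| ≥ c₀|ξ−ξ_k|^{q₁} whenever |ξ−ξ_k| ≤ ε₀ for some k; (b) there exist q₂ > 0 and C₁, C₂ > 0 such that |h''(ξ)| ≥ C₂|ξ|^{q₂} whenever |ξ| ≥ C₁. Then there exists a constant C > 0 such that for all real a ≤ b: |∫_a^b e^{i t h(ξ)} dξ| ≤ C t^{−1/(2+q₂)} for all 0 < t < 1, and |∫_a^b e^{i t h(ξ)} dξ| ≤ C t^{−1/(2+q₁)} for all t ≥ 1, with C independent of a, b and t. -/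

import Mathlib

open MeasureTheory Complex Set intervalIntegral

lemma norm_exp_I_mul_real (r : ℝ) : ‖Complex.exp (Complex.I * (r : ℂ))‖ = 1 := by
  rw [mul_comm, Complex.norm_exp_ofReal_mul_I]

lemma vdc1 (φ g w : ℝ → ℝ) (hd1 : ∀ x, HasDerivAt φ (g x) x) (hd2 : ∀ x, HasDerivAt g (w x) x)
    (hgc : Continuous g) (hwc : Continuous w)
    {a b μ : ℝ} (hab : a ≤ b) (hμ : 0 < μ)
    (h1 : ∀ x ∈ Set.Icc a b, μ ≤ g x)
    (h2 : ∀ x ∈ Set.Icc a b, 0 ≤ w x) :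
    ‖∫ y in a..b, Complex.exp (Complex.I * (φ y : ℂ))‖ ≤ 3 / μ := by
  have hIcc : Set.uIcc a b = Set.Icc a b := Set.uIcc_of_le hab
  have hgpos : ∀ x ∈ Set.Icc a b, 0 < g x := fun x hx => lt_of_lt_of_le hμ (h1 x hx)
  have hne : ∀ x ∈ Set.Icc a b, (Complex.I * (g x : ℂ)) ≠ 0 := by
    intro x hx
    simp only [ne_eq, mul_eq_zero, Complex.I_ne_zero, Complex.ofReal_eq_zero, false_or]
    exact ne_of_gt (hgpos x hx)
  set u : ℝ → ℂ := fun x => 1 / (Complex.I * (g x : ℂ)) with hu_def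
  set u' : ℝ → ℂ := fun x => -(Complex.I * (w x : ℂ)) / (Complex.I * (g x : ℂ)) ^ 2 with hu'_def
  set v : ℝ → ℂ := fun x => Complex.exp (Complex.I * (φ x : ℂ)) with hv_def
  set v' : ℝ → ℂ := fun x => Complex.exp (Complex.I * (φ x : ℂ)) * (Complex.I * (g x : ℂ)) with hv'_def
  have hu : ∀ x ∈ Set.uIcc a b, HasDerivAt u (u' x) x := by
    intro x hx
    rw [hIcc] at hx
    have hden : HasDerivAt (fun y => Complex.I * (g y : ℂ)) (Complex.I * (w x : ℂ)) x :=
      ((hd2 x).ofReal_comp).const_mul Complex.I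
    have := (hasDerivAt_const x (1:ℂ)).div hden (hne x hx)
    refine this.congr_deriv ?_
    rw [hu'_def]
    field_simp
    ring
  have hv : ∀ x ∈ Set.uIcc a b, HasDerivAt v (v' x) x := by
    intro x _
    exact (((hd1 x).ofReal_comp).const_mul Complex.I).cexp
  have hu'int : IntervalIntegrable u' volume a b := by
    apply ContinuousOn.intervalIntegrable
    rw [hIcc]
    apply ContinuousOn.div
    · exact (continuous_neg.comp ((continuous_const.mul (Complex.continuous_ofReal.comp hwc)))).continuousOn
    · exact ((continuous_const.mul (Complex.continuous_ofReal.comp hgc)).pow 2).continuousOn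
    · intro x hx
      exact pow_ne_zero 2 (hne x hx)
  have hφc : Continuous φ := by
    have : Differentiable ℝ φ := fun x => (hd1 x).differentiableAt
    exact this.continuous
  have hv'int : IntervalIntegrable v' volume a b := by
    apply Continuous.intervalIntegrable
    exact (Complex.continuous_exp.comp (continuous_const.mul (Complex.continuous_ofReal.comp hφc))).mul
      (continuous_const.mul (Complex.continuous_ofReal.comp hgc))
  have hsplit : (∫ y in a..b, v y) = ∫ y in a..b, u y * v' y := by
    apply intervalIntegral.integral_congr
    intro x hx
    rw [hIcc] at hx
    rw [hu_def, hv'_def, hv_def]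
    simp only
    rw [one_div, mul_comm (Complex.exp _) _, ← mul_assoc, inv_mul_cancel₀ (hne x hx), one_mul]
  have hibp : (∫ y in a..b, u y * v' y) = u b * v b - u a * v a - ∫ y in a..b, u' y * v y :=
    intervalIntegral.integral_mul_deriv_eq_deriv_mul hu hv hu'int hv'int
  have hvnorm : ∀ x, ‖v x‖ = 1 := fun x => norm_exp_I_mul_real (φ x)
  have hunorm : ∀ x ∈ Set.Icc a b, ‖u x‖ ≤ 1 / μ := by
    intro x hx
    rw [hu_def]
    simp only [one_div, norm_inv, norm_mul, Complex.norm_I, Complex.norm_real, Real.norm_eq_abs, one_mul]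
    rw [_root_.abs_of_pos (hgpos x hx)]
    exact inv_anti₀ hμ (h1 x hx)
  have hinv : ∀ x ∈ Set.uIcc a b, HasDerivAt (fun y => -(g y)⁻¹) (w x / (g x) ^ 2) x := by
    intro x hx
    rw [hIcc] at hx
    have := ((hd2 x).inv (ne_of_gt (hgpos x hx))).neg
    refine this.congr_deriv ?_
    ring
  have hratint : IntervalIntegrable (fun x => w x / (g x) ^ 2) volume a b := by
    apply ContinuousOn.intervalIntegrable
    rw [hIcc]
    apply ContinuousOn.div hwc.continuousOn (hgc.pow 2).continuousOn
    intro x hx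
    exact pow_ne_zero 2 (ne_of_gt (hgpos x hx))
  have hftc : (∫ y in a..b, w y / (g y) ^ 2) = -(g b)⁻¹ - -(g a)⁻¹ :=
    intervalIntegral.integral_eq_sub_of_hasDerivAt hinv hratint
  have hnorm_u' : ∀ x ∈ Set.Icc a b, ‖u' x * v x‖ = w x / (g x) ^ 2 := by
    intro x hx
    rw [norm_mul, hvnorm x, mul_one, hu'_def]
    simp only [norm_div, norm_neg, norm_pow, norm_mul, Complex.norm_I, Complex.norm_real,
      Real.norm_eq_abs, one_mul]
    rw [_root_.abs_of_nonneg (h2 x hx), _root_.abs_of_pos (hgpos x hx)]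
  have hbound3 : ‖∫ y in a..b, u' y * v y‖ ≤ 1 / μ := by
    calc ‖∫ y in a..b, u' y * v y‖ ≤ ∫ y in a..b, ‖u' y * v y‖ :=
          intervalIntegral.norm_integral_le_integral_norm hab
      _ = ∫ y in a..b, w y / (g y) ^ 2 := by
          apply intervalIntegral.integral_congr
          intro x hx; rw [hIcc] at hx; exact hnorm_u' x hx
      _ = -(g b)⁻¹ - -(g a)⁻¹ := hftc
      _ = (g a)⁻¹ - (g b)⁻¹ := by ring
      _ ≤ (g a)⁻¹ := by
          have h1' : 0 < g b := hgpos b ⟨hab, le_refl b⟩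
          have : 0 < (g b)⁻¹ := by positivity
          linarith
      _ ≤ 1 / μ := by
          rw [one_div]
          exact inv_anti₀ hμ (h1 a ⟨le_refl a, hab⟩)
  calc ‖∫ y in a..b, v y‖ = ‖u b * v b - u a * v a - ∫ y in a..b, u' y * v y‖ := by
        rw [hsplit, hibp]
    _ ≤ ‖u b * v b - u a * v a‖ + ‖∫ y in a..b, u' y * v y‖ := norm_sub_le _ _
    _ ≤ (‖u b * v b‖ + ‖u a * v a‖) + ‖∫ y in a..b, u' y * v y‖ := by
        have := norm_sub_le (u b * v b) (u a * v a); linarith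
    _ ≤ (1/μ + 1/μ) + 1/μ := by
        have hb' : ‖u b * v b‖ ≤ 1/μ := by
          rw [norm_mul, hvnorm b, mul_one]; exact hunorm b ⟨hab, le_refl b⟩
        have ha' : ‖u a * v a‖ ≤ 1/μ := by
          rw [norm_mul, hvnorm a, mul_one]; exact hunorm a ⟨le_refl a, hab⟩
        linarith
    _ = 3 / μ := by ring

lemma vdc1_neg (φ g w : ℝ → ℝ) (hd1 : ∀ x, HasDerivAt φ (g x) x) (hd2 : ∀ x, HasDerivAt g (w x) x)
    (hgc : Continuous g) (hwc : Continuous w)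
    {a b μ : ℝ} (hab : a ≤ b) (hμ : 0 < μ)
    (h1 : ∀ x ∈ Set.Icc a b, g x ≤ -μ)
    (h2 : ∀ x ∈ Set.Icc a b, 0 ≤ w x) :
    ‖∫ y in a..b, Complex.exp (Complex.I * (φ y : ℂ))‖ ≤ 3 / μ := by
  have hflip : (∫ y in a..b, Complex.exp (Complex.I * (φ y : ℂ)))
      = ∫ y in (-b)..(-a), Complex.exp (Complex.I * ((φ (-y) : ℝ) : ℂ)) := by
    rw [intervalIntegral.integral_comp_neg (fun y => Complex.exp (Complex.I * ((φ y : ℝ) : ℂ)))]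
    simp
  rw [hflip]
  apply vdc1 (fun x => φ (-x)) (fun x => -g (-x)) (fun x => w (-x))
  · intro x
    have := (hd1 (-x)).comp x (hasDerivAt_neg x)
    refine this.congr_deriv ?_; ring
  · intro x
    have := ((hd2 (-x)).comp x (hasDerivAt_neg x)).neg
    refine this.congr_deriv ?_; ring
  · exact hgc.comp continuous_neg |>.neg
  · exact hwc.comp continuous_neg
  · linarith
  · exact hμ
  · intro x hx
    have : -x ∈ Set.Icc a b := ⟨by linarith [hx.2], by linarith [hx.1]⟩
    have := h1 (-x) this; linarith
  · intro x hx
    have : -x ∈ Set.Icc a b := ⟨by linarith [hx.2], by linarith [hx.1]⟩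
    exact h2 (-x) this

lemma exp_I_intble (φ : ℝ → ℝ) (hφc : Continuous φ) (c d : ℝ) :
    IntervalIntegrable (fun y => Complex.exp (Complex.I * (φ y : ℂ))) volume c d :=
  (Complex.continuous_exp.comp (continuous_const.mul
    (Complex.continuous_ofReal.comp hφc))).intervalIntegrable c d

lemma triv_bound (φ : ℝ → ℝ) {c d : ℝ} (hcd : c ≤ d) :
    ‖∫ y in c..d, Complex.exp (Complex.I * (φ y : ℂ))‖ ≤ d - c := by
  have := intervalIntegral.norm_integral_le_of_norm_le_const
    (f := fun y => Complex.exp (Complex.I * (φ y : ℂ))) (C := 1) (a := c) (b := d)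
    (fun x _ => le_of_eq (norm_exp_I_mul_real (φ x)))
  rwa [one_mul, _root_.abs_of_nonneg (by linarith)] at this

lemma vdc2_pos (φ g w : ℝ → ℝ) (hd1 : ∀ x, HasDerivAt φ (g x) x) (hd2 : ∀ x, HasDerivAt g (w x) x)
    (hgc : Continuous g) (hwc : Continuous w)
    {a b lam : ℝ} (hab : a ≤ b) (hlam : 0 < lam)
    (h2 : ∀ x ∈ Set.Icc a b, lam ≤ w x) :
    ‖∫ y in a..b, Complex.exp (Complex.I * (φ y : ℂ))‖ ≤ 8 / Real.sqrt lam := by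
  have hφc : Continuous φ := Differentiable.continuous (fun x => (hd1 x).differentiableAt)
  have hsq : 0 < Real.sqrt lam := Real.sqrt_pos.mpr hlam
  set r : ℝ := (Real.sqrt lam)⁻¹ with hr_def
  have hr : 0 < r := by positivity
  have hlr : lam * r = Real.sqrt lam := by
    rw [hr_def, ← Real.mul_self_sqrt hlam.le]
    field_simp
    rw [Real.sqrt_sq hsq.le]
  have hlrpos : 0 < lam * r := by rw [hlr]; exact hsq
  have h3lr : 3 / (lam * r) = 3 / Real.sqrt lam := by rw [hlr]
  -- growth estimate
  have hgrow : ∀ x ∈ Set.Icc a b, ∀ y ∈ Set.Icc a b, x ≤ y → g x + lam * (y - x) ≤ g y := by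
    have hmono : MonotoneOn (fun z => g z - lam * z) (Set.Icc a b) := by
      apply monotoneOn_of_deriv_nonneg (convex_Icc a b)
      · exact (hgc.sub (continuous_const.mul continuous_id)).continuousOn
      · intro x _
        exact ((hd2 x).sub ((hasDerivAt_id x).const_mul lam)).differentiableAt.differentiableWithinAt
      · intro x hx
        rw [interior_Icc] at hx
        have hD : HasDerivAt (fun z => g z - lam * z) (w x - lam * 1) x :=
          (hd2 x).sub ((hasDerivAt_id x).const_mul lam)
        rw [hD.deriv]
        have := h2 x ⟨hx.1.le, hx.2.le⟩
        linarith
    intro x hx y hy hxy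
    have := hmono hx hy hxy
    simp only at this
    nlinarith
  have hFint := exp_I_intble φ hφc
  -- case analysis
  rcases le_or_gt 0 (g a) with hA | hA
  · -- Case A
    rcases le_or_gt b (a + r) with hba | hba
    · have := triv_bound φ hab
      have h8 : (8:ℝ) / Real.sqrt lam = 8 * r := by rw [hr_def]; ring
      rw [h8]
      have : b - a ≤ r := by linarith
      nlinarith [triv_bound φ hab]
    · have hm : a ≤ a + r := by linarith
      have hmb : a + r ≤ b := hba.le
      rw [← intervalIntegral.integral_add_adjacent_intervals (hFint a (a+r)) (hFint (a+r) b)]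
      have e1 : ‖∫ y in a..(a+r), Complex.exp (Complex.I * (φ y : ℂ))‖ ≤ r := by
        have := triv_bound φ hm; linarith [triv_bound φ hm]
      have e2 : ‖∫ y in (a+r)..b, Complex.exp (Complex.I * (φ y : ℂ))‖ ≤ 3 / (lam * r) := by
        apply vdc1 φ g w hd1 hd2 hgc hwc hmb hlrpos
        · intro x hx
          have hxI : x ∈ Set.Icc a b := ⟨by linarith [hx.1], hx.2⟩
          have := hgrow a ⟨le_refl a, hab⟩ x hxI (by linarith [hx.1])
          nlinarith [hx.1]
        · intro x hx
          have hxI : x ∈ Set.Icc a b := ⟨by linarith [hx.1], hx.2⟩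
          linarith [h2 x hxI]
      calc ‖_ + _‖ ≤ r + 3 / (lam * r) := le_trans (norm_add_le _ _) (by linarith)
        _ = 1 / Real.sqrt lam + 3 / Real.sqrt lam := by rw [h3lr, hr_def, one_div]
        _ ≤ 8 / Real.sqrt lam := by
            rw [← add_div]
            exact (div_le_div_iff_of_pos_right hsq).mpr (by norm_num)
  · -- g a < 0
    rcases le_or_gt (g b) 0 with hB | hB
    · -- Case B
      rcases le_or_gt (b - r) a with hba | hba
      · have h8 : (8:ℝ) / Real.sqrt lam = 8 * r := by rw [hr_def]; ring
        rw [h8]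
        have : b - a ≤ r := by linarith
        nlinarith [triv_bound φ hab]
      · have hm : b - r ≤ b := by linarith
        have hmb : a ≤ b - r := hba.le
        rw [← intervalIntegral.integral_add_adjacent_intervals (hFint a (b-r)) (hFint (b-r) b)]
        have e2 : ‖∫ y in (b-r)..b, Complex.exp (Complex.I * (φ y : ℂ))‖ ≤ r := by
          have := triv_bound φ hm; linarith [triv_bound φ hm]
        have e1 : ‖∫ y in a..(b-r), Complex.exp (Complex.I * (φ y : ℂ))‖ ≤ 3 / (lam * r) := by
          apply vdc1_neg φ g w hd1 hd2 hgc hwc hmb hlrpos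
          · intro x hx
            have hxI : x ∈ Set.Icc a b := ⟨hx.1, by linarith [hx.2]⟩
            have := hgrow x hxI b ⟨hab, le_refl b⟩ (by linarith [hx.2])
            nlinarith [hx.2]
          · intro x hx
            have hxI : x ∈ Set.Icc a b := ⟨hx.1, by linarith [hx.2]⟩
            linarith [h2 x hxI]
        calc ‖_ + _‖ ≤ 3 / (lam * r) + r := le_trans (norm_add_le _ _) (by linarith)
          _ = 3 / Real.sqrt lam + 1 / Real.sqrt lam := by rw [h3lr, hr_def, one_div]
          _ ≤ 8 / Real.sqrt lam := by
              rw [← add_div]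
              exact (div_le_div_iff_of_pos_right hsq).mpr (by norm_num)
    · -- Case C
      have h0mem : (0:ℝ) ∈ Set.Icc (g a) (g b) := ⟨hA.le, hB.le⟩
      obtain ⟨x0, hx0, hgx0⟩ := intermediate_value_Icc hab hgc.continuousOn h0mem
      set p : ℝ := max a (x0 - r) with hp_def
      set q : ℝ := min b (x0 + r) with hq_def
      have ha_p : a ≤ p := le_max_left _ _
      have hp_x0 : p ≤ x0 := max_le hx0.1 (by linarith)
      have hx0_q : x0 ≤ q := le_min hx0.2 (by linarith)
      have hq_b : q ≤ b := min_le_left _ _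
      have hpq : p ≤ q := hp_x0.trans hx0_q
      have hp_b : p ≤ b := hp_x0.trans hx0.2
      rw [← intervalIntegral.integral_add_adjacent_intervals (hFint a p) (hFint p b),
        ← intervalIntegral.integral_add_adjacent_intervals (hFint p q) (hFint q b)]
      have e_mid : ‖∫ y in p..q, Complex.exp (Complex.I * (φ y : ℂ))‖ ≤ 2 * r := by
        have h1' : q ≤ x0 + r := min_le_right _ _
        have h2' : x0 - r ≤ p := le_max_right _ _
        have := triv_bound φ hpq
        linarith
      have e_left : ‖∫ y in a..p, Complex.exp (Complex.I * (φ y : ℂ))‖ ≤ 3 / (lam * r) := by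
        rcases eq_or_lt_of_le ha_p with heq | hlt
        · rw [← heq, intervalIntegral.integral_same, norm_zero]
          positivity
        · have hpval : p = x0 - r := by
            rcases max_cases a (x0 - r) with ⟨h1', _⟩ | ⟨h1', _⟩
            · rw [hp_def, h1'] at hlt; exact absurd hlt (lt_irrefl a)
            · exact h1'
          apply vdc1_neg φ g w hd1 hd2 hgc hwc hlt.le hlrpos
          · intro x hx
            have hxI : x ∈ Set.Icc a b := ⟨hx.1, le_trans hx.2 hp_b⟩
            have hx0I : x0 ∈ Set.Icc a b := hx0
            have := hgrow x hxI x0 hx0I (le_trans hx.2 hp_x0)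
            rw [hgx0] at this
            have hxp : x ≤ x0 - r := hpval ▸ hx.2
            nlinarith
          · intro x hx
            have hxI : x ∈ Set.Icc a b := ⟨hx.1, le_trans hx.2 hp_b⟩
            linarith [h2 x hxI]
      have e_right : ‖∫ y in q..b, Complex.exp (Complex.I * (φ y : ℂ))‖ ≤ 3 / (lam * r) := by
        rcases eq_or_lt_of_le hq_b with heq | hlt
        · rw [heq, intervalIntegral.integral_same, norm_zero]
          positivity
        · have hqval : q = x0 + r := by
            rcases min_cases b (x0 + r) with ⟨h1', _⟩ | ⟨h1', _⟩
            · rw [hq_def, h1'] at hlt; exact absurd hlt (lt_irrefl b)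
            · exact h1'
          apply vdc1 φ g w hd1 hd2 hgc hwc hlt.le hlrpos
          · intro x hx
            have hxI : x ∈ Set.Icc a b := ⟨le_trans (le_trans hx0.1 hx0_q) hx.1, hx.2⟩
            have hx0I : x0 ∈ Set.Icc a b := hx0
            have := hgrow x0 hx0I x hxI (le_trans hx0_q hx.1)
            rw [hgx0] at this
            have hxq : x0 + r ≤ x := hqval ▸ hx.1
            nlinarith
          · intro x hx
            have hxI : x ∈ Set.Icc a b := ⟨le_trans (le_trans hx0.1 hx0_q) hx.1, hx.2⟩
            linarith [h2 x hxI]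
      have htot := norm_add_le (∫ y in a..p, Complex.exp (Complex.I * (φ y : ℂ)))
        ((∫ y in p..q, Complex.exp (Complex.I * (φ y : ℂ))) + ∫ y in q..b, Complex.exp (Complex.I * (φ y : ℂ)))
      have htot2 := norm_add_le (∫ y in p..q, Complex.exp (Complex.I * (φ y : ℂ)))
        (∫ y in q..b, Complex.exp (Complex.I * (φ y : ℂ)))
      have hfin : 3 / (lam * r) + (2 * r + 3 / (lam * r)) = 8 / Real.sqrt lam := by
        rw [h3lr, hr_def]
        field_simp
        ring
      linarith

lemma ii_conj (f : ℝ → ℂ) (a b : ℝ) :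
    (∫ x in a..b, (starRingEnd ℂ) (f x)) = (starRingEnd ℂ) (∫ x in a..b, f x) := by
  rcases le_total a b with hab | hab
  · rw [intervalIntegral.integral_of_le hab, intervalIntegral.integral_of_le hab, integral_conj]
  · rw [intervalIntegral.integral_of_ge hab, intervalIntegral.integral_of_ge hab, integral_conj,
      map_neg]

lemma vdc2 (φ g w : ℝ → ℝ) (hd1 : ∀ x, HasDerivAt φ (g x) x) (hd2 : ∀ x, HasDerivAt g (w x) x)
    (hgc : Continuous g) (hwc : Continuous w)
    {a b lam : ℝ} (hab : a ≤ b) (hlam : 0 < lam)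
    (h2 : ∀ x ∈ Set.Icc a b, lam ≤ |w x|) :
    ‖∫ y in a..b, Complex.exp (Complex.I * (φ y : ℂ))‖ ≤ 8 / Real.sqrt lam := by
  by_cases hsgn : ∀ x ∈ Set.Icc a b, lam ≤ w x
  · exact vdc2_pos φ g w hd1 hd2 hgc hwc hab hlam hsgn
  · push_neg at hsgn
    obtain ⟨y0, hy0, hy0'⟩ := hsgn
    have hy0neg : w y0 ≤ -lam := by
      have := h2 y0 hy0
      rcases abs_cases (w y0) with ⟨h1', _⟩ | ⟨h1', _⟩ <;> [linarith; linarith]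
    have hallneg : ∀ x ∈ Set.Icc a b, w x ≤ -lam := by
      intro x hx
      by_contra hcon
      push_neg at hcon
      have hxpos : lam ≤ w x := by
        have := h2 x hx
        rcases abs_cases (w x) with ⟨h1', _⟩ | ⟨h1', _⟩ <;> [linarith; linarith]
      have hzero : (0:ℝ) ∈ Set.uIcc (w x) (w y0) := by
        rw [Set.mem_uIcc]
        right; constructor <;> linarith
      have huIccab : Set.uIcc x y0 ⊆ Set.Icc a b := by
        rw [← Set.uIcc_of_le hab]
        exact Set.uIcc_subset_uIcc (by rw [Set.uIcc_of_le hab]; exact hx)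
          (by rw [Set.uIcc_of_le hab]; exact hy0)
      obtain ⟨z, hz, hz0⟩ := intermediate_value_uIcc (a := x) (b := y0) hwc.continuousOn hzero
      have hcontra := h2 z (huIccab hz)
      rw [hz0] at hcontra
      simp at hcontra
      linarith
    -- negative case: conjugate
    have hkey : (∫ y in a..b, Complex.exp (Complex.I * (φ y : ℂ)))
        = (starRingEnd ℂ) (∫ y in a..b, Complex.exp (Complex.I * ((-φ y : ℝ) : ℂ))) := by
      rw [← ii_conj]
      apply intervalIntegral.integral_congr
      intro x _
      simp only
      rw [← Complex.exp_conj]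
      congr 1
      simp [Complex.ext_iff]
    rw [hkey, RCLike.norm_conj]
    apply vdc2_pos (fun x => -φ x) (fun x => -g x) (fun x => -w x)
      (fun x => (hd1 x).neg) (fun x => (hd2 x).neg) hgc.neg hwc.neg hab hlam
    intro x hx
    have := hallneg x hx
    linarith

lemma vdc_key (φ g w : ℝ → ℝ) (hd1 : ∀ x, HasDerivAt φ (g x) x) (hd2 : ∀ x, HasDerivAt g (w x) x)
    (hgc : Continuous g) (hwc : Continuous w) (ρ lam : ℝ) (hρ : 0 < ρ) (hlam : 0 < lam) :
    ∀ (n : ℕ) (ξ : Fin n → ℝ), Monotone ξ → ∀ a b : ℝ, a ≤ b →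
    (∀ x ∈ Set.Icc a b, (∀ k, ρ ≤ |x - ξ k|) → lam ≤ |w x|) →
    ‖∫ y in a..b, Complex.exp (Complex.I * (φ y : ℂ))‖
      ≤ 2*n*ρ + 8*(n+1)/Real.sqrt lam := by
  have hφc : Continuous φ := Differentiable.continuous (fun x => (hd1 x).differentiableAt)
  have hFint := exp_I_intble φ hφc
  have hsq : 0 < Real.sqrt lam := Real.sqrt_pos.mpr hlam
  intro n
  induction n with
  | zero =>
    intro ξ _ a b hab hbound
    have hb' : ∀ x ∈ Set.Icc a b, lam ≤ |w x| := fun x hx => hbound x hx (fun k => k.elim0)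
    have := vdc2 φ g w hd1 hd2 hgc hwc hab hlam hb'
    push_cast
    linarith
  | succ n IH =>
    intro ξ hmono a b hab hbound
    set ξl : ℝ := ξ (Fin.last n) with hξl_def
    set u : ℝ := max a (min b (ξl - ρ)) with hu_def
    set v : ℝ := max a (min b (ξl + ρ)) with hv_def
    have hau : a ≤ u := le_max_left _ _
    have hub : u ≤ b := max_le hab (min_le_left _ _)
    have hav : a ≤ v := le_max_left _ _
    have hvb : v ≤ b := max_le hab (min_le_left _ _)
    have huv : u ≤ v := by
      apply max_le_max (le_refl a)
      apply min_le_min (le_refl b)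
      linarith
    rw [← intervalIntegral.integral_add_adjacent_intervals (hFint a u) (hFint u b),
      ← intervalIntegral.integral_add_adjacent_intervals (hFint u v) (hFint v b)]
    have e_left : ‖∫ y in a..u, Complex.exp (Complex.I * (φ y : ℂ))‖
        ≤ 2*n*ρ + 8*(n+1)/Real.sqrt lam := by
      rcases eq_or_lt_of_le hau with heq | hlt
      · rw [← heq, intervalIntegral.integral_same, norm_zero]
        positivity
      · have huval : u ≤ ξl - ρ := by
          rcases max_cases a (min b (ξl - ρ)) with ⟨h1', h2'⟩ | ⟨h1', _⟩
          · rw [hu_def, h1'] at hlt; exact absurd hlt (lt_irrefl a)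
          · rw [hu_def, h1']; exact min_le_right _ _
        have hmono' : Monotone (ξ ∘ Fin.castSucc) := by
          intro i j hij
          exact hmono (Fin.castSucc_le_castSucc_iff.mpr hij)
        have := IH (ξ ∘ Fin.castSucc) hmono' a u hlt.le ?_
        · exact this
        · intro x hx hk
          apply hbound x ⟨hx.1, le_trans hx.2 hub⟩
          intro k
          induction k using Fin.lastCases with
          | last =>
            rw [abs_sub_comm, _root_.abs_of_nonneg (by rw [← hξl_def]; linarith [hx.2, huval])]
            rw [← hξl_def]
            linarith [hx.2, huval]
          | cast i => exact hk i
    have e_mid : ‖∫ y in u..v, Complex.exp (Complex.I * (φ y : ℂ))‖ ≤ 2*ρ := by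
      have := triv_bound φ huv
      have hdiff : v - u ≤ 2*ρ := by
        rw [hu_def, hv_def, max_def, max_def, min_def, min_def]
        split_ifs <;> linarith
      linarith
    have e_right : ‖∫ y in v..b, Complex.exp (Complex.I * (φ y : ℂ))‖ ≤ 8/Real.sqrt lam := by
      rcases eq_or_lt_of_le hvb with heq | hlt
      · rw [heq, intervalIntegral.integral_same, norm_zero]
        positivity
      · have hvval : ξl + ρ ≤ v := by
          rcases min_cases b (ξl + ρ) with ⟨h1', _⟩ | ⟨h1', _⟩
          · exfalso
            have : b ≤ v := by rw [hv_def, h1']; exact le_max_right _ _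
            linarith
          · rw [hv_def, h1']; exact le_max_right _ _
        apply vdc2 φ g w hd1 hd2 hgc hwc hlt.le hlam
        intro x hx
        apply hbound x ⟨le_trans hav hx.1, hx.2⟩
        intro k
        have hkl : ξ k ≤ ξl := hmono (Fin.le_last k)
        rw [_root_.abs_of_nonneg (by linarith [hx.1])]
        linarith [hx.1]
    have htot := norm_add_le (∫ y in a..u, Complex.exp (Complex.I * (φ y : ℂ)))
      ((∫ y in u..v, Complex.exp (Complex.I * (φ y : ℂ))) + ∫ y in v..b, Complex.exp (Complex.I * (φ y : ℂ)))
    have htot2 := norm_add_le (∫ y in u..v, Complex.exp (Complex.I * (φ y : ℂ)))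
      (∫ y in v..b, Complex.exp (Complex.I * (φ y : ℂ)))
    push_cast
    push_cast at htot htot2 ⊢
    have harith : (2*(n:ℝ)*ρ + 8*((n:ℝ)+1)/Real.sqrt lam) + (2*ρ + 8/Real.sqrt lam)
        = 2*((n:ℝ)+1)*ρ + 8*((n:ℝ)+1+1)/Real.sqrt lam := by
      field_simp
      ring
    linarith

/-- A corollary of the Van der Corput lemma: decay of oscillatory integrals
`∫_a^b e^{ith(ξ)} dξ` when `h''` has finitely many zeros of order at most `q₁`
and grows like `|ξ|^{q₂}` at infinity. -/
theorem van_der_corput_corollary (h : ℝ → ℝ) (hreg : ContDiff ℝ 2 h)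
    (n : ℕ) (hn : 1 ≤ n) (ξ : Fin n → ℝ) (hmono : StrictMono ξ)
    (hzeros : {x : ℝ | iteratedDeriv 2 h x = 0} = Set.range ξ)
    (q1 : ℝ) (hq1 : 1 ≤ q1) (ε0 : ℝ) (hε0 : 0 < ε0) (c0 : ℝ) (hc0 : 0 < c0)
    (ha : ∀ k : Fin n, ∀ x : ℝ, |x - ξ k| ≤ ε0 →
      c0 * |x - ξ k| ^ q1 ≤ |iteratedDeriv 2 h x|)
    (q2 : ℝ) (hq2 : 0 < q2) (C1 C2 : ℝ) (hC1 : 0 < C1) (hC2 : 0 < C2)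
    (hb : ∀ x : ℝ, C1 ≤ |x| → C2 * |x| ^ q2 ≤ |iteratedDeriv 2 h x|) :
    ∃ C > (0 : ℝ), ∀ a b : ℝ, a ≤ b →
      (∀ t : ℝ, 0 < t → t < 1 →
        ‖∫ y in a..b, Complex.exp (Complex.I * ((t * h y : ℝ) : ℂ))‖
          ≤ C * t ^ (-(1 / (2 + q2)))) ∧
      (∀ t : ℝ, 1 ≤ t →
        ‖∫ y in a..b, Complex.exp (Complex.I * ((t * h y : ℝ) : ℂ))‖
          ≤ C * t ^ (-(1 / (2 + q1)))) := by
  -- derivatives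
  have hD2eq : iteratedDeriv 2 h = deriv (deriv h) := by
    rw [show (2:ℕ) = 1 + 1 from rfl, iteratedDeriv_succ, iteratedDeriv_one]
  set D2 : ℝ → ℝ := deriv (deriv h) with hD2_def
  rw [hD2eq] at hzeros ha hb
  have hreg' : ContDiff ℝ (1+1 : WithTop ℕ∞) h := by
    rwa [show (1+1 : WithTop ℕ∞) = 2 by norm_num]
  have hder1 : Differentiable ℝ h := (contDiff_succ_iff_deriv.mp hreg').1
  have hcd1 : ContDiff ℝ 1 (deriv h) := (contDiff_succ_iff_deriv.mp hreg').2.2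
  have hder2 : Differentiable ℝ (deriv h) := (contDiff_one_iff_deriv.mp hcd1).1
  have hcontw : Continuous D2 := (contDiff_one_iff_deriv.mp hcd1).2
  have hcontg : Continuous (deriv h) := hder2.continuous
  -- constants
  set ε1 : ℝ := min ε0 1 with hε1_def
  have hε1 : 0 < ε1 := lt_min hε0 one_pos
  have hε1ε0 : ε1 ≤ ε0 := min_le_left _ _
  have hε11 : ε1 ≤ 1 := min_le_right _ _
  set K : Set ℝ := Set.Icc (-C1) C1 ∩ ⋂ k : Fin n, {x : ℝ | ε1 ≤ |x - ξ k|} with hK_def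
  have hKclosed : IsClosed K := by
    apply IsClosed.inter isClosed_Icc
    apply isClosed_iInter
    intro k
    exact isClosed_le continuous_const ((continuous_id.sub continuous_const).abs)
  have hKcomp : IsCompact K := IsCompact.of_isClosed_subset isCompact_Icc hKclosed
    Set.inter_subset_left
  obtain ⟨δ, hδpos, hδ⟩ : ∃ δ > (0:ℝ), ∀ x ∈ K, δ ≤ |D2 x| := by
    by_cases hne : K.Nonempty
    · obtain ⟨x0, hx0K, hx0min⟩ := hKcomp.exists_isMinOn hne (hcontw.abs).continuousOn
      refine ⟨|D2 x0|, ?_, fun x hx => isMinOn_iff.mp hx0min x hx⟩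
      rw [gt_iff_lt, _root_.abs_pos]
      intro h0
      have : x0 ∈ {x : ℝ | D2 x = 0} := h0
      rw [hzeros] at this
      obtain ⟨k, hk⟩ := this
      have := (Set.mem_iInter.mp hx0K.2) k
      rw [hk] at this
      simp at this
      linarith
    · exact ⟨1, one_pos, fun x hx => absurd ⟨x, hx⟩ hne⟩
  -- master pointwise lower bound
  have hmaster : ∀ (r : ℝ), 0 < r → r ≤ ε1 → ∀ x : ℝ, (∀ k, r ≤ |x - ξ k|) →
      min (c0 * r ^ q1) (min δ (C2 * C1 ^ q2)) ≤ |D2 x| := by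
    intro r hr hrε x hx
    by_cases hxC : C1 ≤ |x|
    · refine le_trans (min_le_right _ _) (le_trans (min_le_right _ _) (le_trans ?_ (hb x hxC)))
      exact mul_le_mul_of_nonneg_left (Real.rpow_le_rpow hC1.le hxC hq2.le) hC2.le
    · by_cases hnear : ∃ k, |x - ξ k| ≤ ε1
      · obtain ⟨k, hk⟩ := hnear
        refine le_trans (min_le_left _ _) (le_trans ?_ (ha k x (le_trans hk hε1ε0)))
        exact mul_le_mul_of_nonneg_left (Real.rpow_le_rpow hr.le (hx k) (by linarith)) hc0.le
      · push_neg at hnear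
        refine le_trans (min_le_right _ _) (le_trans (min_le_left _ _) ?_)
        apply hδ
        constructor
        · have := abs_lt.mp (lt_of_not_ge hxC)
          constructor <;> linarith [this.1, this.2]
        · exact Set.mem_iInter.mpr fun k => (hnear k).le
  set lam1 : ℝ := min (c0 * ε1 ^ q1) (min δ (C2 * C1 ^ q2)) with hlam1_def
  have hrp1 : (0:ℝ) < ε1 ^ q1 := Real.rpow_pos_of_pos hε1 _
  have hrp2 : (0:ℝ) < C1 ^ q2 := Real.rpow_pos_of_pos hC1 _
  have hlam1pos : 0 < lam1 := lt_min (by positivity) (lt_min hδpos (by positivity))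
  have h2q1 : (0:ℝ) < 2 + q1 := by linarith
  have h2q2 : (0:ℝ) < 2 + q2 := by linarith
  have hsqlam1 : 0 < Real.sqrt lam1 := Real.sqrt_pos.mpr hlam1pos
  have hsqC : 0 < Real.sqrt (C2 * C1 ^ q2) := Real.sqrt_pos.mpr (by positivity)
  set Ca : ℝ := 2*C1 + 16/Real.sqrt (C2*C1^q2) with hCa_def
  set Cb : ℝ := 2*n + 8*(n+1)/Real.sqrt lam1 with hCb_def
  have hCapos : 0 < Ca := by positivity
  have hCbpos : 0 < Cb := by positivity
  refine ⟨max Ca Cb, lt_of_lt_of_le hCapos (le_max_left _ _), ?_⟩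
  intro a b hab
  constructor
  · -- small t
    intro t ht ht1
    set σ : ℝ := t ^ (-(1/(2+q2))) with hσ_def
    have hσpos : 0 < σ := Real.rpow_pos_of_pos ht _
    have hexpneg : -(1/(2+q2)) ≤ 0 := by
      have : 0 < 1/(2+q2) := by positivity
      linarith
    have hσ1 : 1 ≤ σ := Real.one_le_rpow_of_pos_of_le_one_of_nonpos ht ht1.le hexpneg
    have hd1' : ∀ x, HasDerivAt (fun y => t * h y) (t * deriv h x) x :=
      fun x => ((hder1 x).hasDerivAt).const_mul t
    have hd2' : ∀ x, HasDerivAt (fun x => t * deriv h x) (t * D2 x) x :=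
      fun x => ((hder2 x).hasDerivAt).const_mul t
    set lam : ℝ := C2 * C1^q2 * t^(2/(2+q2)) with hlam_def
    have hlampos : 0 < lam := by
      have := Real.rpow_pos_of_pos ht (2/(2+q2)); positivity
    have hbound : ∀ x ∈ Set.Icc a b, (∀ k : Fin 1, C1*σ ≤ |x - (fun _ : Fin 1 => (0:ℝ)) k|) →
        lam ≤ |t * D2 x| := by
      intro x hx hk
      have hxabs : C1*σ ≤ |x| := by simpa using hk 0
      have hC1x : C1 ≤ |x| := le_trans (by nlinarith) hxabs
      have hb1 : C2 * |x|^q2 ≤ |D2 x| := hb x hC1x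
      have hb2 : (C1*σ)^q2 ≤ |x|^q2 := Real.rpow_le_rpow (by positivity) hxabs hq2.le
      have hb3 : (C1*σ)^q2 = C1^q2 * σ^q2 := Real.mul_rpow hC1.le hσpos.le
      rw [abs_mul, abs_of_pos ht]
      have hσq2 : σ^q2 = t ^ (-(1/(2+q2)) * q2) := by
        rw [hσ_def, Real.rpow_mul ht.le]
      have htt : t * t ^ (-(1/(2+q2)) * q2) = t ^ (2/(2+q2)) := by
        nth_rewrite 1 [← Real.rpow_one t]
        rw [← Real.rpow_add ht]
        congr 1
        field_simp
        ring
      have hlameq : lam = t * (C2 * (C1*σ)^q2) := by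
        rw [hlam_def, hb3, hσq2, ← htt]; ring
      rw [hlameq]
      have : C2 * (C1*σ)^q2 ≤ |D2 x| := le_trans (mul_le_mul_of_nonneg_left hb2 hC2.le) hb1
      exact mul_le_mul_of_nonneg_left this ht.le
    have hkey : ‖∫ y in a..b, Complex.exp (Complex.I * ((t * h y : ℝ) : ℂ))‖
        ≤ 2*(1:ℕ)*(C1*σ) + 8*((1:ℕ)+1)/Real.sqrt lam :=
      vdc_key (fun y => t * h y) (fun x => t * deriv h x) (fun x => t * D2 x) hd1' hd2'
        (continuous_const.mul hcontg) (continuous_const.mul hcontw) (C1*σ) lam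
        (by positivity) hlampos 1 (fun _ => (0:ℝ)) monotone_const a b hab hbound
    have hsqlam : Real.sqrt lam = Real.sqrt (C2*C1^q2) * σ⁻¹ := by
      rw [hlam_def, Real.sqrt_mul (by positivity)]
      congr 1
      rw [Real.sqrt_eq_rpow, ← Real.rpow_mul ht.le, hσ_def, Real.rpow_neg ht.le, inv_inv]
      congr 1
      field_simp
    have heq : 2*((1:ℕ):ℝ)*(C1*σ) + 8*(((1:ℕ):ℝ)+1)/Real.sqrt lam = Ca * σ := by
      rw [hsqlam, hCa_def]
      push_cast
      field_simp
      ring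
    calc ‖∫ y in a..b, Complex.exp (Complex.I * ((t * h y : ℝ) : ℂ))‖
        ≤ 2*((1:ℕ):ℝ)*(C1*σ) + 8*(((1:ℕ):ℝ)+1)/Real.sqrt lam := hkey
      _ = Ca * σ := heq
      _ ≤ max Ca Cb * σ := mul_le_mul_of_nonneg_right (le_max_left _ _) hσpos.le
  · -- large t
    intro t ht
    have htpos : (0:ℝ) < t := lt_of_lt_of_le one_pos ht
    set τ : ℝ := t ^ (-(1/(2+q1))) with hτ_def
    have hτpos : 0 < τ := Real.rpow_pos_of_pos htpos _
    have hexpneg : -(1/(2+q1)) ≤ 0 := by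
      have : 0 < 1/(2+q1) := by positivity
      linarith
    have hτ1 : τ ≤ 1 := Real.rpow_le_one_of_one_le_of_nonpos ht hexpneg
    set ρ : ℝ := min ε1 τ with hρ_def
    have hρpos : 0 < ρ := lt_min hε1 hτpos
    have hρε1 : ρ ≤ ε1 := min_le_left _ _
    have hρτ : ρ ≤ τ := min_le_right _ _
    have hd1' : ∀ x, HasDerivAt (fun y => t * h y) (t * deriv h x) x :=
      fun x => ((hder1 x).hasDerivAt).const_mul t
    have hd2' : ∀ x, HasDerivAt (fun x => t * deriv h x) (t * D2 x) x :=
      fun x => ((hder2 x).hasDerivAt).const_mul t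
    set lam : ℝ := lam1 * t^(2/(2+q1)) with hlam_def
    have htep : (0:ℝ) < t ^ (2/(2+q1)) := Real.rpow_pos_of_pos htpos _
    have hlampos : 0 < lam := by positivity
    have hte : t^(2/(2+q1)) ≤ t := by
      have h1' : 2/(2+q1) ≤ 1 := by rw [div_le_one h2q1]; linarith
      have := Real.rpow_le_rpow_of_exponent_le ht h1'
      rwa [Real.rpow_one] at this
    -- component bounds
    have hττ : t * (c0 * τ^q1) = c0 * t^(2/(2+q1)) := by
      have hτq1 : τ^q1 = t ^ (-(1/(2+q1)) * q1) := by
        rw [hτ_def, Real.rpow_mul htpos.le]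
      have htt : t * t ^ (-(1/(2+q1)) * q1) = t ^ (2/(2+q1)) := by
        nth_rewrite 1 [← Real.rpow_one t]
        rw [← Real.rpow_add htpos]
        congr 1
        field_simp
        ring
      rw [hτq1, ← htt]; ring
    have hA : lam ≤ t * (c0 * ρ^q1) := by
      rcases min_cases ε1 τ with ⟨hmeq, hle⟩ | ⟨hmeq, hlt⟩
      · rw [hρ_def, hmeq]
        have h1' : lam1 ≤ c0 * ε1^q1 := min_le_left _ _
        calc lam = lam1 * t^(2/(2+q1)) := hlam_def
          _ ≤ (c0 * ε1^q1) * t := by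
              apply mul_le_mul h1' hte htep.le (by positivity)
          _ = t * (c0 * ε1^q1) := by ring
      · rw [hρ_def, hmeq, hττ]
        have hε1q1 : ε1^q1 ≤ 1 := Real.rpow_le_one hε1.le hε11 (by linarith)
        have h1' : lam1 ≤ c0 := by
          calc lam1 ≤ c0 * ε1^q1 := min_le_left _ _
            _ ≤ c0 * 1 := mul_le_mul_of_nonneg_left hε1q1 hc0.le
            _ = c0 := mul_one c0
        exact mul_le_mul_of_nonneg_right h1' htep.le
    have hB : lam ≤ t * δ := by
      have h1' : lam1 ≤ δ := le_trans (min_le_right _ _) (min_le_left _ _)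
      calc lam = lam1 * t^(2/(2+q1)) := hlam_def
        _ ≤ δ * t := mul_le_mul h1' hte htep.le hδpos.le
        _ = t * δ := mul_comm _ _
    have hC : lam ≤ t * (C2 * C1^q2) := by
      have h1' : lam1 ≤ C2 * C1^q2 := le_trans (min_le_right _ _) (min_le_right _ _)
      calc lam = lam1 * t^(2/(2+q1)) := hlam_def
        _ ≤ (C2 * C1^q2) * t := mul_le_mul h1' hte htep.le (by positivity)
        _ = t * (C2 * C1^q2) := mul_comm _ _
    have hbound : ∀ x ∈ Set.Icc a b, (∀ k : Fin n, ρ ≤ |x - ξ k|) → lam ≤ |t * D2 x| := by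
      intro x hx hk
      have hmas := hmaster ρ hρpos hρε1 x hk
      rw [abs_mul, abs_of_pos htpos]
      have : lam ≤ t * min (c0 * ρ ^ q1) (min δ (C2 * C1 ^ q2)) := by
        rcases min_cases (c0 * ρ ^ q1) (min δ (C2 * C1 ^ q2)) with ⟨hmeq, _⟩ | ⟨hmeq, _⟩
        · rw [hmeq]; exact hA
        · rw [hmeq]
          rcases min_cases δ (C2 * C1 ^ q2) with ⟨hmeq2, _⟩ | ⟨hmeq2, _⟩
          · rw [hmeq2]; exact hB
          · rw [hmeq2]; exact hC
      exact le_trans this (mul_le_mul_of_nonneg_left hmas htpos.le)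
    have hkey : ‖∫ y in a..b, Complex.exp (Complex.I * ((t * h y : ℝ) : ℂ))‖
        ≤ 2*(n:ℝ)*ρ + 8*((n:ℝ)+1)/Real.sqrt lam :=
      vdc_key (fun y => t * h y) (fun x => t * deriv h x) (fun x => t * D2 x) hd1' hd2'
        (continuous_const.mul hcontg) (continuous_const.mul hcontw) ρ lam
        hρpos hlampos n ξ hmono.monotone a b hab hbound
    have hsqlam : Real.sqrt lam = Real.sqrt lam1 * τ⁻¹ := by
      rw [hlam_def, Real.sqrt_mul hlam1pos.le]
      congr 1
      rw [Real.sqrt_eq_rpow, ← Real.rpow_mul htpos.le, hτ_def, Real.rpow_neg htpos.le, inv_inv]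
      congr 1
      field_simp
    have hstep : 2*(n:ℝ)*ρ + 8*((n:ℝ)+1)/Real.sqrt lam ≤ Cb * τ := by
      rw [hsqlam, hCb_def]
      have e1 : 2*(n:ℝ)*ρ ≤ 2*(n:ℝ)*τ := by
        apply mul_le_mul_of_nonneg_left hρτ
        positivity
      have e2 : 8*((n:ℝ)+1)/(Real.sqrt lam1 * τ⁻¹) = (8*((n:ℝ)+1)/Real.sqrt lam1) * τ := by
        field_simp
      rw [e2]
      have : (2*(n:ℝ) + 8*((n:ℝ)+1)/Real.sqrt lam1) * τ
          = 2*(n:ℝ)*τ + (8*((n:ℝ)+1)/Real.sqrt lam1) * τ := by ring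
      rw [this]
      linarith
    calc ‖∫ y in a..b, Complex.exp (Complex.I * ((t * h y : ℝ) : ℂ))‖
        ≤ 2*(n:ℝ)*ρ + 8*((n:ℝ)+1)/Real.sqrt lam := hkey
      _ ≤ Cb * τ := hstep
      _ ≤ max Ca Cb * τ := mul_le_mul_of_nonneg_right (le_max_right _ _) hτpos.le
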